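/- arXiv:2504.12822 — 7 statements merged into one kernel-verified Lean document; each statement's English description precedes it below -/
import Mathlib

section
/- Let φ, g̃ : ℝ² → Mat₂(ℂ) with det(g̃) = 1 everywhere and g̃_{22} nowhere zero, satisfying the component form of the Miura system: g̃_{11,t} = φ_{12} g̃_{21}, g̃_{12,t} = φ_{12} g̃_{22}, g̃_{21,t} = −φ_{21} g̃_{11}, g̃_{22,t} = −φ_{21} g̃_{12}, φ_{11,x} = −g̃_{12} g̃_{21}, φ_{12,x} = g̃_{12} g̃_{11}, φ_{21,x} = −g̃_{21} g̃_{22}, φ_{22,x} = g̃_{12} g̃_{21}. Then u := φ_{21} and v := i g̃_{12}/g̃_{22} solve the coupled Fokas-Lenells equations u_{xt} − u − 2i u v u_x = 0 and v_{xt} − v + 2i u v v_x = 0. -/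
noncomputable def px (f : ℝ → ℝ → ℂ) (x t : ℝ) : ℂ := deriv (fun x' => f x' t) x
noncomputable def pt (f : ℝ → ℝ → ℂ) (x t : ℝ) : ℂ := deriv (fun t' => f x t') t

open Complex

private lemma diffX {f : ℝ → ℝ → ℂ} (hf : ContDiff ℝ (⊤ : ℕ∞) (fun p : ℝ × ℝ => f p.1 p.2))
    (x t : ℝ) : DifferentiableAt ℝ (fun x' => f x' t) x :=
  by
  have h := ((hf.differentiable (by simp)) (x, t)).comp x
    (differentiableAt_id.prodMk (differentiableAt_const t) :
      DifferentiableAt ℝ (fun x' : ℝ => (x', t)) x)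
  exact h

private lemma diffT {f : ℝ → ℝ → ℂ} (hf : ContDiff ℝ (⊤ : ℕ∞) (fun p : ℝ × ℝ => f p.1 p.2))
    (x t : ℝ) : DifferentiableAt ℝ (fun t' => f x t') t :=
  ((hf.differentiable (by simp)) (x, t)).comp t ((differentiableAt_const x).prodMk differentiableAt_id)

private lemma hX {f : ℝ → ℝ → ℂ} (hf : ContDiff ℝ (⊤ : ℕ∞) (fun p : ℝ × ℝ => f p.1 p.2))
    (x t : ℝ) : HasDerivAt (fun x' => f x' t) (px f x t) x :=
  (diffX hf x t).hasDerivAt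

private lemma hT {f : ℝ → ℝ → ℂ} (hf : ContDiff ℝ (⊤ : ℕ∞) (fun p : ℝ × ℝ => f p.1 p.2))
    (x t : ℝ) : HasDerivAt (fun t' => f x t') (pt f x t) t :=
  (diffT hf x t).hasDerivAt

private lemma clairaut (f : ℝ → ℝ → ℂ) (hf : ContDiff ℝ (⊤ : ℕ∞) (fun p : ℝ × ℝ => f p.1 p.2))
    (x t : ℝ) : pt (px f) x t = px (pt f) x t := by
  set F : ℝ × ℝ → ℂ := fun p => f p.1 p.2 with hFdef
  have hFd : Differentiable ℝ F := hf.differentiable (by simp)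
  have hderiv : ∀ y, HasFDerivAt F (fderiv ℝ F y) y := fun y => (hFd y).hasFDerivAt
  have hF' : ContDiff ℝ 1 (fderiv ℝ F) := hf.fderiv_right (by exact WithTop.coe_le_coe.mpr le_top)
  have h2d : HasFDerivAt (fderiv ℝ F) (fderiv ℝ (fderiv ℝ F) (x, t)) (x, t) :=
    (hF'.differentiable one_ne_zero (x, t)).hasFDerivAt
  have hsymm := second_derivative_symmetric hderiv h2d ((0 : ℝ), (1 : ℝ)) ((1 : ℝ), (0 : ℝ))
  have hpx : ∀ a b : ℝ, px f a b = fderiv ℝ F (a, b) (1, 0) := by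
    intro a b
    have h1 : HasDerivAt (fun x' : ℝ => (x', b)) ((1 : ℝ), (0 : ℝ)) a :=
      (hasDerivAt_id a).prodMk (hasDerivAt_const a b)
    exact ((hderiv (a, b)).comp_hasDerivAt a h1).deriv
  have hpt : ∀ a b : ℝ, pt f a b = fderiv ℝ F (a, b) (0, 1) := by
    intro a b
    have h1 : HasDerivAt (fun t' : ℝ => (a, t')) ((0 : ℝ), (1 : ℝ)) b :=
      (hasDerivAt_const b a).prodMk (hasDerivAt_id b)
    exact ((hderiv (a, b)).comp_hasDerivAt b h1).deriv
  have hG : ∀ w : ℝ × ℝ, HasFDerivAt (fun p => fderiv ℝ F p w)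
      ((fderiv ℝ (fderiv ℝ F) (x, t)).flip w) (x, t) := by
    intro w
    have := h2d.clm_apply (hasFDerivAt_const w (x, t))
    simpa using this
  have hA : pt (px f) x t = fderiv ℝ (fderiv ℝ F) (x, t) (0, 1) (1, 0) := by
    have hc : HasDerivAt (fun t' : ℝ => (x, t')) ((0 : ℝ), (1 : ℝ)) t :=
      (hasDerivAt_const t x).prodMk (hasDerivAt_id t)
    have h2 : HasDerivAt (fun t' => fderiv ℝ F (x, t') (1, 0))
        (((fderiv ℝ (fderiv ℝ F) (x, t)).flip (1, 0)) (0, 1)) t :=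
      (hG (1, 0)).comp_hasDerivAt t hc
    have heq : pt (px f) x t = deriv (fun t' => fderiv ℝ F (x, t') (1, 0)) t := by
      unfold pt; congr 1; funext t'; exact hpx x t'
    rw [heq, h2.deriv]; rfl
  have hB : px (pt f) x t = fderiv ℝ (fderiv ℝ F) (x, t) (1, 0) (0, 1) := by
    have hc : HasDerivAt (fun x' : ℝ => (x', t)) ((1 : ℝ), (0 : ℝ)) x :=
      (hasDerivAt_id x).prodMk (hasDerivAt_const x t)
    have h2 : HasDerivAt (fun x' => fderiv ℝ F (x', t) (0, 1))
        (((fderiv ℝ (fderiv ℝ F) (x, t)).flip (0, 1)) (1, 0)) x :=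
      by have h := (hG (0, 1)).comp_hasDerivAt x hc; exact h
    have heq : px (pt f) x t = deriv (fun x' => fderiv ℝ F (x', t) (0, 1)) x := by
      unfold px; congr 1; funext x'; exact hpt x' t
    rw [heq, h2.deriv]; rfl
  rw [hA, hB]; exact hsymm

/-- The component Miura system with `det g̃ = 1`, `g̃₂₂ ≠ 0`, implies that
`u = φ₂₁` and `v = i g̃₁₂/g̃₂₂` solve the coupled Fokas-Lenells equations. -/
theorem stmt4 (g11 g12 g21 g22 f11 f12 f21 f22 : ℝ → ℝ → ℂ)
    (hg11 : ContDiff ℝ (⊤ : ℕ∞) (fun p : ℝ × ℝ => g11 p.1 p.2))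
    (hg12 : ContDiff ℝ (⊤ : ℕ∞) (fun p : ℝ × ℝ => g12 p.1 p.2))
    (hg21 : ContDiff ℝ (⊤ : ℕ∞) (fun p : ℝ × ℝ => g21 p.1 p.2))
    (hg22 : ContDiff ℝ (⊤ : ℕ∞) (fun p : ℝ × ℝ => g22 p.1 p.2))
    (hf11 : ContDiff ℝ (⊤ : ℕ∞) (fun p : ℝ × ℝ => f11 p.1 p.2))
    (hf12 : ContDiff ℝ (⊤ : ℕ∞) (fun p : ℝ × ℝ => f12 p.1 p.2))
    (hf21 : ContDiff ℝ (⊤ : ℕ∞) (fun p : ℝ × ℝ => f21 p.1 p.2))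
    (hf22 : ContDiff ℝ (⊤ : ℕ∞) (fun p : ℝ × ℝ => f22 p.1 p.2))
    (hdet : ∀ x t : ℝ, g11 x t * g22 x t - g12 x t * g21 x t = 1)
    (hg22ne : ∀ x t : ℝ, g22 x t ≠ 0)
    (h1 : ∀ x t : ℝ, pt g11 x t = f12 x t * g21 x t)
    (h2 : ∀ x t : ℝ, pt g12 x t = f12 x t * g22 x t)
    (h3 : ∀ x t : ℝ, pt g21 x t = -(f21 x t) * g11 x t)
    (h4 : ∀ x t : ℝ, pt g22 x t = -(f21 x t) * g12 x t)
    (h5 : ∀ x t : ℝ, px f11 x t = -(g12 x t) * g21 x t)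
    (h6 : ∀ x t : ℝ, px f12 x t = g12 x t * g11 x t)
    (h7 : ∀ x t : ℝ, px f21 x t = -(g21 x t) * g22 x t)
    (h8 : ∀ x t : ℝ, px f22 x t = g12 x t * g21 x t) :
    (∀ x t : ℝ,
      pt (px f21) x t - f21 x t
        - 2 * Complex.I * f21 x t * (Complex.I * g12 x t / g22 x t) * px f21 x t = 0)
    ∧ (∀ x t : ℝ,
      pt (px (fun x' t' => Complex.I * g12 x' t' / g22 x' t')) x t
        - Complex.I * g12 x t / g22 x t
        + 2 * Complex.I * f21 x t * (Complex.I * g12 x t / g22 x t)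
            * px (fun x' t' => Complex.I * g12 x' t' / g22 x' t') x t = 0) := by
  constructor
  · intro x t
    have hprod : HasDerivAt (fun t' => -(g21 x t') * g22 x t')
        (-(pt g21 x t) * g22 x t + -(g21 x t) * pt g22 x t) t :=
      ((hT hg21 x t).neg).mul (hT hg22 x t)
    have key : pt (px f21) x t = -(pt g21 x t) * g22 x t + -(g21 x t) * pt g22 x t := by
      unfold pt
      simp only [h7]
      exact hprod.deriv
    rw [key, h3, h4, h7]
    have h0 := hg22ne x t
    have hxinv : g22 x t * (g22 x t)⁻¹ = 1 := mul_inv_cancel₀ h0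
    have hI : Complex.I * Complex.I = -1 := Complex.I_mul_I
    simp only [div_eq_mul_inv]
    linear_combination f21 x t * hdet x t
      + (-2 * f21 x t * g12 x t * g21 x t) * hxinv
      + (2 * f21 x t * g12 x t * g21 x t * g22 x t * (g22 x t)⁻¹) * hI
  · intro x t
    set V : ℝ → ℝ → ℂ := fun x' t' => Complex.I * g12 x' t' / g22 x' t' with hVdef
    have hV : ContDiff ℝ (⊤ : ℕ∞) (fun p : ℝ × ℝ => V p.1 p.2) := by
      simp only [hVdef, div_eq_mul_inv]
      exact (contDiff_const.mul hg12).mul (hg22.inv (fun p : ℝ × ℝ => hg22ne p.1 p.2))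
    have hptV : ∀ a b : ℝ, pt V a b = Complex.I * f12 a b
        - Complex.I * f21 a b * (V a b * V a b) := by
      intro a b
      have hd : HasDerivAt (fun t' => Complex.I * g12 a t' / g22 a t')
          ((Complex.I * pt g12 a b * g22 a b - Complex.I * g12 a b * pt g22 a b)
            / (g22 a b) ^ 2) b :=
        ((hT hg12 a b).const_mul Complex.I).div (hT hg22 a b) (hg22ne a b)
      have : pt V a b = (Complex.I * pt g12 a b * g22 a b
          - Complex.I * g12 a b * pt g22 a b) / (g22 a b) ^ 2 := hd.deriv
      rw [this, h2, h4, hVdef]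
      have h0 := hg22ne a b
      field_simp
      linear_combination (g12 a b ^ 2 * f21 a b) * Complex.I_sq
    have hc := clairaut V hV x t
    have hE : px (pt V) x t = Complex.I * px f12 x t
        - (Complex.I * px f21 x t * (V x t * V x t)
          + Complex.I * f21 x t * (px V x t * V x t + V x t * px V x t)) := by
      have hpow : HasDerivAt (fun x' => V x' t * V x' t)
          (px V x t * V x t + V x t * px V x t) x := (hX hV x t).mul (hX hV x t)
      have hd : HasDerivAt
          (fun x' => Complex.I * f12 x' t - Complex.I * f21 x' t * (V x' t * V x' t))
          (Complex.I * px f12 x t - (Complex.I * px f21 x t * (V x t * V x t)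
            + Complex.I * f21 x t * (px V x t * V x t + V x t * px V x t))) x :=
        ((hX hf12 x t).const_mul Complex.I).sub
          (((hX hf21 x t).const_mul Complex.I).mul hpow)
      have heq : px (pt V) x t
          = deriv (fun x' => Complex.I * f12 x' t
            - Complex.I * f21 x' t * (V x' t * V x' t)) x := by
        unfold px; congr 1; funext x'; exact hptV x' t
      rw [heq, hd.deriv]
    have hVval : V x t = Complex.I * g12 x t / g22 x t := rfl
    rw [hc, hE, h6, h7, hVval]
    have h0 := hg22ne x t
    have hxinv : g22 x t * (g22 x t)⁻¹ = 1 := mul_inv_cancel₀ h0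
    have hI : Complex.I * Complex.I = -1 := Complex.I_mul_I
    simp only [div_eq_mul_inv]
    linear_combination
      (Complex.I * g21 x t * g22 x t * g12 x t ^ 2 * (g22 x t)⁻¹ ^ 2) * hI
      + (-(Complex.I * g21 x t * g12 x t ^ 2 * (g22 x t)⁻¹)
          - Complex.I * g11 x t * g12 x t) * hxinv
      + (Complex.I * g12 x t * (g22 x t)⁻¹) * hdet x t
end

section
/- Let (u,v) be a smooth solution of the coupled Fokas-Lenells equations with u nowhere zero, and define g̃_{22} = exp(i ∫ u v dt) (a smooth function with g̃_{22,t} = i u v g̃_{22}), g̃_{11} = (1 + i u_x v)/g̃_{22}, g̃_{12} = −i v g̃_{22}, g̃_{21} = −u_x/g̃_{22}, φ_{12} = −i v_t + u v², φ_{21} = u, and let φ_{11}, φ_{22} satisfy φ_{11,x} = −i u_x v and φ_{22,x} = i u_x v. Then (φ, g̃) satisfies the Miura system g̃_{11,t} = φ_{12} g̃_{21}, g̃_{12,t} = φ_{12} g̃_{22}, g̃_{21,t} = −φ_{21} g̃_{11}, g̃_{22,t} = −φ_{21} g̃_{12}, φ_{12,x} = g̃_{12} g̃_{11}, φ_{21,x}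 = −g̃_{21} g̃_{22}, and det(g̃) = 1. -/
section helpers

variable {f : ℝ → ℝ → ℂ}

lemma hasDerivAt_px_fderiv (hf : ContDiff ℝ (⊤ : ℕ∞) (fun p : ℝ × ℝ => f p.1 p.2)) (x t : ℝ) :
    HasDerivAt (fun x' => f x' t) (fderiv ℝ (fun p : ℝ × ℝ => f p.1 p.2) (x, t) (1, 0)) x := by
  have hline : HasDerivAt (fun x' : ℝ => ((x', t) : ℝ × ℝ)) ((1 : ℝ), (0 : ℝ)) x :=
    (hasDerivAt_id x).prodMk (hasDerivAt_const x t)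
  exact ((hf.differentiable (by simp) (x, t)).hasFDerivAt).comp_hasDerivAt x hline

lemma hasDerivAt_pt_fderiv (hf : ContDiff ℝ (⊤ : ℕ∞) (fun p : ℝ × ℝ => f p.1 p.2)) (x t : ℝ) :
    HasDerivAt (fun t' => f x t') (fderiv ℝ (fun p : ℝ × ℝ => f p.1 p.2) (x, t) (0, 1)) t := by
  have hline : HasDerivAt (fun t' : ℝ => ((x, t') : ℝ × ℝ)) ((0 : ℝ), (1 : ℝ)) t :=
    (hasDerivAt_const t x).prodMk (hasDerivAt_id t)
  exact ((hf.differentiable (by simp) (x, t)).hasFDerivAt).comp_hasDerivAt t hline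

lemma px_eq_fderiv (hf : ContDiff ℝ (⊤ : ℕ∞) (fun p : ℝ × ℝ => f p.1 p.2)) (x t : ℝ) :
    px f x t = fderiv ℝ (fun p : ℝ × ℝ => f p.1 p.2) (x, t) (1, 0) :=
  (hasDerivAt_px_fderiv hf x t).deriv

lemma pt_eq_fderiv (hf : ContDiff ℝ (⊤ : ℕ∞) (fun p : ℝ × ℝ => f p.1 p.2)) (x t : ℝ) :
    pt f x t = fderiv ℝ (fun p : ℝ × ℝ => f p.1 p.2) (x, t) (0, 1) :=
  (hasDerivAt_pt_fderiv hf x t).deriv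

lemma hasDerivAt_px (hf : ContDiff ℝ (⊤ : ℕ∞) (fun p : ℝ × ℝ => f p.1 p.2)) (x t : ℝ) :
    HasDerivAt (fun x' => f x' t) (px f x t) x := by
  rw [px_eq_fderiv hf]; exact hasDerivAt_px_fderiv hf x t

lemma hasDerivAt_pt (hf : ContDiff ℝ (⊤ : ℕ∞) (fun p : ℝ × ℝ => f p.1 p.2)) (x t : ℝ) :
    HasDerivAt (fun t' => f x t') (pt f x t) t := by
  rw [pt_eq_fderiv hf]; exact hasDerivAt_pt_fderiv hf x t

lemma fderiv_smooth (hf : ContDiff ℝ (⊤ : ℕ∞) (fun p : ℝ × ℝ => f p.1 p.2)) (w : ℝ × ℝ) :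
    ContDiff ℝ (⊤ : ℕ∞) (fun p : ℝ × ℝ => fderiv ℝ (fun q : ℝ × ℝ => f q.1 q.2) p w) :=
  (hf.fderiv_right (by simp)).clm_apply contDiff_const

lemma px_smooth (hf : ContDiff ℝ (⊤ : ℕ∞) (fun p : ℝ × ℝ => f p.1 p.2)) :
    ContDiff ℝ (⊤ : ℕ∞) (fun p : ℝ × ℝ => px f p.1 p.2) := by
  have : (fun p : ℝ × ℝ => px f p.1 p.2)
      = fun p : ℝ × ℝ => fderiv ℝ (fun q : ℝ × ℝ => f q.1 q.2) p (1, 0) := by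
    funext p
    simpa using px_eq_fderiv hf p.1 p.2
  rw [this]; exact fderiv_smooth hf _

lemma pt_smooth (hf : ContDiff ℝ (⊤ : ℕ∞) (fun p : ℝ × ℝ => f p.1 p.2)) :
    ContDiff ℝ (⊤ : ℕ∞) (fun p : ℝ × ℝ => pt f p.1 p.2) := by
  have : (fun p : ℝ × ℝ => pt f p.1 p.2)
      = fun p : ℝ × ℝ => fderiv ℝ (fun q : ℝ × ℝ => f q.1 q.2) p (0, 1) := by
    funext p
    simpa using pt_eq_fderiv hf p.1 p.2
  rw [this]; exact fderiv_smooth hf _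

lemma snd_deriv_eq (hf : ContDiff ℝ (⊤ : ℕ∞) (fun p : ℝ × ℝ => f p.1 p.2)) (x t : ℝ) (w a : ℝ × ℝ) :
    fderiv ℝ (fun p : ℝ × ℝ => fderiv ℝ (fun q : ℝ × ℝ => f q.1 q.2) p w) (x, t) a
      = fderiv ℝ (fderiv ℝ (fun q : ℝ × ℝ => f q.1 q.2)) (x, t) a w := by
  rw [fderiv_clm_apply ((hf.fderiv_right (m := (⊤ : ℕ∞)) (by simp)).differentiable (by simp) (x, t))
      (differentiableAt_const w)]
  simp

lemma mixed_partials (hf : ContDiff ℝ (⊤ : ℕ∞) (fun p : ℝ × ℝ => f p.1 p.2)) (x t : ℝ) :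
    px (pt f) x t = pt (px f) x t := by
  set F := fun p : ℝ × ℝ => f p.1 p.2 with hF
  have hptF : (fun p : ℝ × ℝ => pt f p.1 p.2)
      = fun p : ℝ × ℝ => fderiv ℝ F p (0, 1) := by
    funext p; simpa using pt_eq_fderiv hf p.1 p.2
  have hpxF : (fun p : ℝ × ℝ => px f p.1 p.2)
      = fun p : ℝ × ℝ => fderiv ℝ F p (1, 0) := by
    funext p; simpa using px_eq_fderiv hf p.1 p.2
  have h1 : px (pt f) x t
      = fderiv ℝ (fderiv ℝ F) (x, t) (1, 0) (0, 1) := by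
    rw [px_eq_fderiv (pt_smooth hf) x t, hptF, snd_deriv_eq hf]
  have h2 : pt (px f) x t
      = fderiv ℝ (fderiv ℝ F) (x, t) (0, 1) (1, 0) := by
    rw [pt_eq_fderiv (px_smooth hf) x t, hpxF, snd_deriv_eq hf]
  rw [h1, h2]
  exact second_derivative_symmetric
    (fun y => ((hf.differentiable (by simp) y).hasFDerivAt))
    (((hf.fderiv_right (m := (⊤ : ℕ∞)) (by simp)).differentiable (by simp) (x, t)).hasFDerivAt) _ _

end helpers

/-- If `(u,v)` solves the coupled Fokas-Lenells equations with `u` nowhere zero,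
then the data `g̃₁₁ = (1+iu_xv)/g̃₂₂`, `g̃₁₂ = -iv g̃₂₂`, `g̃₂₁ = -u_x/g̃₂₂`
(with `g̃₂₂,t = iuv g̃₂₂`), `φ₁₂ = -iv_t + uv²`, `φ₂₁ = u`, `φ₁₁,x = -iu_xv`,
`φ₂₂,x = iu_xv` satisfy the Miura system and `det g̃ = 1`. -/
theorem stmt5 (u v g22 g11 g12 g21 f11 f12 f21 f22 : ℝ → ℝ → ℂ)
    (hu : ContDiff ℝ (⊤ : ℕ∞) (fun p : ℝ × ℝ => u p.1 p.2))
    (hv : ContDiff ℝ (⊤ : ℕ∞) (fun p : ℝ × ℝ => v p.1 p.2))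
    (hg22smooth : ContDiff ℝ (⊤ : ℕ∞) (fun p : ℝ × ℝ => g22 p.1 p.2))
    (hu0 : ∀ x t : ℝ, u x t ≠ 0)
    (heq1 : ∀ x t : ℝ,
      pt (px u) x t - u x t - 2 * Complex.I * u x t * v x t * px u x t = 0)
    (heq2 : ∀ x t : ℝ,
      pt (px v) x t - v x t + 2 * Complex.I * u x t * v x t * px v x t = 0)
    (hg22ne : ∀ x t : ℝ, g22 x t ≠ 0)
    (hg22t : ∀ x t : ℝ, pt g22 x t = Complex.I * u x t * v x t * g22 x t)
    (hg11 : ∀ x t : ℝ, g11 x t = (1 + Complex.I * px u x t * v x t) / g22 x t)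
    (hg12 : ∀ x t : ℝ, g12 x t = -Complex.I * v x t * g22 x t)
    (hg21 : ∀ x t : ℝ, g21 x t = -(px u x t) / g22 x t)
    (hf12 : ∀ x t : ℝ, f12 x t = -Complex.I * pt v x t + u x t * (v x t)^2)
    (hf21 : ∀ x t : ℝ, f21 x t = u x t)
    (hf11x : ∀ x t : ℝ, px f11 x t = -Complex.I * px u x t * v x t)
    (hf22x : ∀ x t : ℝ, px f22 x t = Complex.I * px u x t * v x t) :
    (∀ x t : ℝ, pt g11 x t = f12 x t * g21 x t)
    ∧ (∀ x t : ℝ, pt g12 x t = f12 x t * g22 x t)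
    ∧ (∀ x t : ℝ, pt g21 x t = -(f21 x t) * g11 x t)
    ∧ (∀ x t : ℝ, pt g22 x t = -(f21 x t) * g12 x t)
    ∧ (∀ x t : ℝ, px f12 x t = g12 x t * g11 x t)
    ∧ (∀ x t : ℝ, px f21 x t = -(g21 x t) * g22 x t)
    ∧ (∀ x t : ℝ, g11 x t * g22 x t - g12 x t * g21 x t = 1) := by
  have I2 : Complex.I * Complex.I = -1 := Complex.I_mul_I
  refine ⟨?_, ?_, ?_, ?_, ?_, ?_, ?_⟩
  · -- pt g11 = f12 * g21
    intro x t
    have Hux : HasDerivAt (fun t' => px u x t') (pt (px u) x t) t :=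
      hasDerivAt_pt (px_smooth hu) x t
    have Hv : HasDerivAt (fun t' => v x t') (pt v x t) t := hasDerivAt_pt hv x t
    have Hg : HasDerivAt (fun t' => g22 x t') (pt g22 x t) t := hasDerivAt_pt hg22smooth x t
    have Hnum : HasDerivAt (fun t' => 1 + Complex.I * px u x t' * v x t')
        (Complex.I * pt (px u) x t * v x t + Complex.I * px u x t * pt v x t) t :=
      ((Hux.const_mul Complex.I).mul Hv).const_add 1
    have Hq := Hnum.div Hg (hg22ne x t)
    have hgfun : (fun t' => g11 x t')
        = fun t' => (1 + Complex.I * px u x t' * v x t') / g22 x t' :=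
      funext fun t' => hg11 x t'
    have hptg11 : pt g11 x t
        = ((Complex.I * pt (px u) x t * v x t + Complex.I * px u x t * pt v x t) * g22 x t
            - (1 + Complex.I * px u x t * v x t) * pt g22 x t) / g22 x t ^ 2 := by
      show deriv (fun t' => g11 x t') t = _
      rw [hgfun]
      exact Hq.deriv
    have hmix : pt (px u) x t
        = u x t + 2 * Complex.I * u x t * v x t * px u x t := by
      linear_combination heq1 x t
    rw [hptg11, hmix, hg22t, hf12, hg21]
    field_simp [hg22ne x t]
    ring_nf
    all_goals simp only [Complex.I_sq]
    all_goals ring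
  · -- pt g12 = f12 * g22
    intro x t
    have Hv : HasDerivAt (fun t' => v x t') (pt v x t) t := hasDerivAt_pt hv x t
    have Hg : HasDerivAt (fun t' => g22 x t') (pt g22 x t) t := hasDerivAt_pt hg22smooth x t
    have H := (Hv.const_mul (-Complex.I)).mul Hg
    have hgfun : (fun t' => g12 x t') = fun t' => -Complex.I * v x t' * g22 x t' :=
      funext fun t' => hg12 x t'
    have hptg12 : pt g12 x t
        = -Complex.I * pt v x t * g22 x t + -Complex.I * v x t * pt g22 x t := by
      show deriv (fun t' => g12 x t') t = _
      rw [hgfun]; exact H.deriv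
    rw [hptg12, hg22t, hf12]
    ring_nf
    all_goals simp only [Complex.I_sq]
    all_goals ring
  · -- pt g21 = -f21 * g11
    intro x t
    have Hux : HasDerivAt (fun t' => px u x t') (pt (px u) x t) t :=
      hasDerivAt_pt (px_smooth hu) x t
    have Hg : HasDerivAt (fun t' => g22 x t') (pt g22 x t) t := hasDerivAt_pt hg22smooth x t
    have H := Hux.neg.div Hg (hg22ne x t)
    have hgfun : (fun t' => g21 x t') = fun t' => -(px u x t') / g22 x t' :=
      funext fun t' => hg21 x t'
    have hptg21 : pt g21 x t
        = (-(pt (px u) x t) * g22 x t - -(px u x t) * pt g22 x t) / g22 x t ^ 2 := by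
      show deriv (fun t' => g21 x t') t = _
      rw [hgfun]; exact H.deriv
    have hmix : pt (px u) x t
        = u x t + 2 * Complex.I * u x t * v x t * px u x t := by
      linear_combination heq1 x t
    rw [hptg21, hmix, hg22t, hf21, hg11]
    field_simp [hg22ne x t]
    ring_nf
    all_goals simp only [Complex.I_sq]
    all_goals ring
  · -- pt g22 = -f21 * g12
    intro x t
    rw [hg22t, hf21, hg12]; ring
  · -- px f12 = g12 * g11
    intro x t
    have Hvt : HasDerivAt (fun x' => pt v x' t) (px (pt v) x t) x :=
      hasDerivAt_px (pt_smooth hv) x t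
    have Hu : HasDerivAt (fun x' => u x' t) (px u x t) x := hasDerivAt_px hu x t
    have Hv : HasDerivAt (fun x' => v x' t) (px v x t) x := hasDerivAt_px hv x t
    have Hv2 : HasDerivAt (fun x' => v x' t ^ 2) (2 * v x t ^ 1 * px v x t) x := by
      have := Hv.mul Hv
      have e1 : (fun x' => v x' t ^ 2) = (fun x' => v x' t) * (fun x' => v x' t) := by
        funext x'; simp [pow_two]
      rw [e1]; exact this.congr_deriv (by ring)
    have H := (Hvt.const_mul (-Complex.I)).add (Hu.mul Hv2)
    have hffun : (fun x' => f12 x' t)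
        = fun x' => -Complex.I * pt v x' t + u x' t * (v x' t) ^ 2 :=
      funext fun x' => hf12 x' t
    have hpxf12 : px f12 x t
        = -Complex.I * px (pt v) x t
          + (px u x t * v x t ^ 2 + u x t * (2 * v x t ^ 1 * px v x t)) := by
      show deriv (fun x' => f12 x' t) x = _
      rw [hffun]; exact H.deriv
    have hmix : px (pt v) x t = pt (px v) x t := mixed_partials hv x t
    have hpxvt : pt (px v) x t
        = v x t - 2 * Complex.I * u x t * v x t * px v x t := by
      linear_combination heq2 x t
    rw [hpxf12, hmix, hpxvt, hg12, hg11]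
    field_simp [hg22ne x t]
    ring_nf
    all_goals simp only [Complex.I_sq]
    all_goals ring
  · -- px f21 = -g21 * g22
    intro x t
    have hffun : (fun x' => f21 x' t) = fun x' => u x' t := funext fun x' => hf21 x' t
    have hpxf21 : px f21 x t = px u x t := by
      show deriv (fun x' => f21 x' t) x = _
      rw [hffun]; rfl
    rw [hpxf21, hg21]
    field_simp [hg22ne x t]
  · -- det = 1
    intro x t
    rw [hg11, hg12, hg21]
    field_simp [hg22ne x t]
    ring
end

section
/- If (u,v) is a smooth solution of the coupled Fokas-Lenells equations u_{xt} − u − 2i u v u_x = 0 and v_{xt} − v + 2i u v v_x = 0, then the functions φ_{12} := −i v_t + u v² and φ_{21} := u satisfy φ_{12,xt} − φ_{12}(1 + 2i u_x v) = 0 and φ_{21,xt} − φ_{21}(1 + 2i u_x v) = 0. -/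
namespace Stmt6Aux

variable {f : ℝ → ℝ → ℂ}

noncomputable def F2 (f : ℝ → ℝ → ℂ) : ℝ × ℝ → ℂ := fun p => f p.1 p.2

lemma sectx (hf : ContDiff ℝ (⊤ : ℕ∞) (F2 f)) (t : ℝ) : ContDiff ℝ (⊤ : ℕ∞) (fun x' => f x' t) :=
  hf.comp (contDiff_id.prodMk contDiff_const)

lemma sectt (hf : ContDiff ℝ (⊤ : ℕ∞) (F2 f)) (x : ℝ) : ContDiff ℝ (⊤ : ℕ∞) (fun t' => f x t') :=
  hf.comp (contDiff_const.prodMk contDiff_id)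

lemma hasDerivAt_x (hf : ContDiff ℝ (⊤ : ℕ∞) (F2 f)) (x t : ℝ) :
    HasDerivAt (fun x' => f x' t) (px f x t) x :=
  ((sectx hf t).differentiable (by simp) x).hasDerivAt

lemma hasDerivAt_t (hf : ContDiff ℝ (⊤ : ℕ∞) (F2 f)) (x t : ℝ) :
    HasDerivAt (fun t' => f x t') (pt f x t) t :=
  ((sectt hf x).differentiable (by simp) t).hasDerivAt

lemma px_eq (hf : ContDiff ℝ (⊤ : ℕ∞) (F2 f)) (x t : ℝ) :
    px f x t = fderiv ℝ (F2 f) (x, t) (1, 0) := by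
  have h1 : HasFDerivAt (fun x' : ℝ => ((x', t) : ℝ × ℝ))
      ((ContinuousLinearMap.id ℝ ℝ).prod 0) x :=
    (hasFDerivAt_id x).prodMk (hasFDerivAt_const t x)
  have h2 : HasFDerivAt (F2 f) (fderiv ℝ (F2 f) (x, t)) (x, t) :=
    (hf.differentiable (by simp) (x, t)).hasFDerivAt
  have h3 := h2.comp x h1
  have h4 : px f x t = ((fderiv ℝ (F2 f) (x, t)).comp
      ((ContinuousLinearMap.id ℝ ℝ).prod 0)) 1 := h3.hasDerivAt.deriv
  simpa using h4

lemma pt_eq (hf : ContDiff ℝ (⊤ : ℕ∞) (F2 f)) (x t : ℝ) :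
    pt f x t = fderiv ℝ (F2 f) (x, t) (0, 1) := by
  have h1 : HasFDerivAt (fun t' : ℝ => ((x, t') : ℝ × ℝ))
      ((0 : ℝ →L[ℝ] ℝ).prod (ContinuousLinearMap.id ℝ ℝ)) t :=
    (hasFDerivAt_const x t).prodMk (hasFDerivAt_id t)
  have h2 : HasFDerivAt (F2 f) (fderiv ℝ (F2 f) (x, t)) (x, t) :=
    (hf.differentiable (by simp) (x, t)).hasFDerivAt
  have h3 := h2.comp t h1
  have h4 : pt f x t = ((fderiv ℝ (F2 f) (x, t)).comp
      ((0 : ℝ →L[ℝ] ℝ).prod (ContinuousLinearMap.id ℝ ℝ))) 1 := h3.hasDerivAt.deriv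
  simpa using h4

lemma contDiff_px (hf : ContDiff ℝ (⊤ : ℕ∞) (F2 f)) : ContDiff ℝ (⊤ : ℕ∞) (F2 (px f)) := by
  have h : F2 (px f) = fun p : ℝ × ℝ => fderiv ℝ (F2 f) p (1, 0) :=
    funext fun p => px_eq hf p.1 p.2
  rw [h]
  exact (hf.fderiv_right (by simp)).clm_apply contDiff_const

lemma contDiff_pt (hf : ContDiff ℝ (⊤ : ℕ∞) (F2 f)) : ContDiff ℝ (⊤ : ℕ∞) (F2 (pt f)) := by
  have h : F2 (pt f) = fun p : ℝ × ℝ => fderiv ℝ (F2 f) p (0, 1) :=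
    funext fun p => pt_eq hf p.1 p.2
  rw [h]
  exact (hf.fderiv_right (by simp)).clm_apply contDiff_const

lemma clairaut (hf : ContDiff ℝ (⊤ : ℕ∞) (F2 f)) (x t : ℝ) :
    px (pt f) x t = pt (px f) x t := by
  have hd : ∀ p : ℝ × ℝ, HasFDerivAt (F2 f) (fderiv ℝ (F2 f) p) p := fun p =>
    (hf.differentiable (by simp) p).hasFDerivAt
  have hf' : ContDiff ℝ (⊤ : ℕ∞) (fderiv ℝ (F2 f)) := hf.fderiv_right (by simp)
  have hx : HasFDerivAt (fderiv ℝ (F2 f))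
      (fderiv ℝ (fderiv ℝ (F2 f)) (x, t)) (x, t) :=
    (hf'.differentiable (by simp) (x, t)).hasFDerivAt
  have hsymm := second_derivative_symmetric hd hx
  -- px (pt f) x t = f'' (1,0) (0,1)
  have e1 : px (pt f) x t =
      fderiv ℝ (fun p : ℝ × ℝ => fderiv ℝ (F2 f) p (0, 1)) (x, t) (1, 0) := by
    rw [px_eq (contDiff_pt hf) x t]
    congr 1
    have h : F2 (pt f) = fun p : ℝ × ℝ => fderiv ℝ (F2 f) p (0, 1) :=
      funext fun p => pt_eq hf p.1 p.2
    rw [h]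
  have e2 : pt (px f) x t =
      fderiv ℝ (fun p : ℝ × ℝ => fderiv ℝ (F2 f) p (1, 0)) (x, t) (0, 1) := by
    rw [pt_eq (contDiff_px hf) x t]
    congr 1
    have h : F2 (px f) = fun p : ℝ × ℝ => fderiv ℝ (F2 f) p (1, 0) :=
      funext fun p => px_eq hf p.1 p.2
    rw [h]
  have c1 : ∀ v : ℝ × ℝ, HasFDerivAt (fun p : ℝ × ℝ => fderiv ℝ (F2 f) p v)
      ((ContinuousLinearMap.apply ℝ ℂ v).comp (fderiv ℝ (fderiv ℝ (F2 f)) (x, t)))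
      (x, t) := fun v =>
    (ContinuousLinearMap.apply ℝ ℂ v).hasFDerivAt.comp (x, t) hx
  rw [e1, e2, (c1 (0,1)).fderiv, (c1 (1,0)).fderiv]
  simp only [ContinuousLinearMap.comp_apply, ContinuousLinearMap.apply_apply]
  exact hsymm (1,0) (0,1)
  
end Stmt6Aux
/-- If `(u,v)` solves the coupled Fokas-Lenells equations, then
`φ₁₂ = -iv_t + uv²` and `φ₂₁ = u` satisfy
`φ₁₂,xt = φ₁₂(1 + 2iu_xv)` and `φ₂₁,xt = φ₂₁(1 + 2iu_xv)`. -/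
theorem stmt6 (u v : ℝ → ℝ → ℂ)
    (hu : ContDiff ℝ (⊤ : ℕ∞) (fun p : ℝ × ℝ => u p.1 p.2))
    (hv : ContDiff ℝ (⊤ : ℕ∞) (fun p : ℝ × ℝ => v p.1 p.2))
    (heq1 : ∀ x t : ℝ,
      pt (px u) x t - u x t - 2 * Complex.I * u x t * v x t * px u x t = 0)
    (heq2 : ∀ x t : ℝ,
      pt (px v) x t - v x t + 2 * Complex.I * u x t * v x t * px v x t = 0) :
    (∀ x t : ℝ,
      pt (px (fun x' t' => -Complex.I * pt v x' t' + u x' t' * (v x' t')^2)) x t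
        - (-Complex.I * pt v x t + u x t * (v x t)^2)
            * (1 + 2 * Complex.I * px u x t * v x t) = 0)
    ∧ (∀ x t : ℝ,
      pt (px u) x t - u x t * (1 + 2 * Complex.I * px u x t * v x t) = 0) := by
  have hu' : ContDiff ℝ (⊤ : ℕ∞) (Stmt6Aux.F2 u) := hu
  have hv' : ContDiff ℝ (⊤ : ℕ∞) (Stmt6Aux.F2 v) := hv
  constructor
  · intro x t
    simp only [pow_two]
    have hpxφ : px (fun x' t' => -Complex.I * pt v x' t' + u x' t' * (v x' t' * v x' t'))
        = fun x t => -Complex.I * pt (px v) x t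
            + (px u x t * (v x t * v x t) + u x t * (px v x t * v x t + v x t * px v x t)) := by
      funext a b
      have h1 := Stmt6Aux.hasDerivAt_x (Stmt6Aux.contDiff_pt hv') a b
      have h2 := Stmt6Aux.hasDerivAt_x hu' a b
      have h3 := Stmt6Aux.hasDerivAt_x hv' a b
      have h : px (fun x' t' => -Complex.I * pt v x' t' + u x' t' * (v x' t' * v x' t')) a b
          = -Complex.I * px (pt v) a b
            + (px u a b * (v a b * v a b) + u a b * (px v a b * v a b + v a b * px v a b)) :=
        ((h1.const_mul (-Complex.I)).add (h2.mul (h3.mul h3))).deriv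
      rw [h, Stmt6Aux.clairaut hv' a b]
    rw [hpxφ]
    have k1 := Stmt6Aux.hasDerivAt_t (Stmt6Aux.contDiff_pt (Stmt6Aux.contDiff_px hv')) x t
    have k2 := Stmt6Aux.hasDerivAt_t (Stmt6Aux.contDiff_px hu') x t
    have k3 := Stmt6Aux.hasDerivAt_t hv' x t
    have k4 := Stmt6Aux.hasDerivAt_t hu' x t
    have k5 := Stmt6Aux.hasDerivAt_t (Stmt6Aux.contDiff_px hv') x t
    have hB : pt (fun x t => -Complex.I * pt (px v) x t
          + (px u x t * (v x t * v x t)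
            + u x t * (px v x t * v x t + v x t * px v x t))) x t
        = -Complex.I * pt (pt (px v)) x t
          + ((pt (px u) x t * (v x t * v x t)
              + px u x t * (pt v x t * v x t + v x t * pt v x t))
            + (pt u x t * (px v x t * v x t + v x t * px v x t)
              + u x t * ((pt (px v) x t * v x t + px v x t * pt v x t)
                + (pt v x t * px v x t + v x t * pt (px v) x t)))) :=
      ((k1.const_mul (-Complex.I)).add
        ((k2.mul (k3.mul k3)).add (k4.mul ((k5.mul k3).add (k3.mul k5))))).deriv
    have hC : pt (pt (px v)) x t = pt v x t
        - (2 * Complex.I * pt u x t * v x t * px v x t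
          + 2 * Complex.I * u x t * pt v x t * px v x t
          + 2 * Complex.I * u x t * v x t * pt (px v) x t) := by
      have hfun : pt (px v)
          = fun x t => v x t - 2 * Complex.I * u x t * v x t * px v x t :=
        funext fun a => funext fun b => by linear_combination heq2 a b
      have h : pt (fun x t => v x t - 2 * Complex.I * u x t * v x t * px v x t) x t
          = pt v x t - ((2 * Complex.I * pt u x t * v x t
              + 2 * Complex.I * u x t * pt v x t) * px v x t
            + 2 * Complex.I * u x t * v x t * pt (px v) x t) :=
        (k3.sub (((k4.const_mul (2 * Complex.I)).mul k3).mul k5)).deriv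
      calc pt (pt (px v)) x t
          = pt (fun x t => v x t - 2 * Complex.I * u x t * v x t * px v x t) x t := by
            rw [hfun]
        _ = _ := by rw [h]; ring
    linear_combination hB - Complex.I * hC + (v x t * v x t) * heq1 x t
      + (2 * (pt v x t * u x t * px v x t + pt u x t * v x t * px v x t
          + u x t * v x t * pt (px v) x t + pt v x t * v x t * px u x t)) * Complex.I_sq
  · intro x t
    linear_combination heq1 x t
end

section
/- Let Θ : ℝ² → ℂ be smooth and set g̃ = [[cos(Θ/2), −sin(Θ/2)],[sin(Θ/2), cos(Θ/2)]]. Then g̃ satisfies the four equations (g̃_{22} g̃_{11,t} − g̃_{21} g̃_{12,t})_x = 0, (g̃_{11} g̃_{22,t} − g̃_{12} g̃_{21,t})_x = 0, g̃_{11} g̃_{12} − (g̃_{11} g̃_{12,t} − g̃_{12} g̃_{11,t})_x = 0, g̃_{21} g̃_{22} − (g̃_{22} g̃_{21,t} − g̃_{21} g̃_{22,t})_x = 0 if and only if Θ satisfies the sine-Gordon equation Θ_{xt} = sin Θ. -/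
private lemma myccos {f : ℝ → ℂ} {f' : ℂ} {x : ℝ} (hf : HasDerivAt f f' x) :
    HasDerivAt (fun y => Complex.cos (f y)) (-Complex.sin (f x) * f') x := by
  have h := ((Complex.hasDerivAt_cos (f x)).hasFDerivAt.restrictScalars ℝ).comp_hasDerivAt x hf
  simpa [mul_comm, Function.comp_def] using h

private lemma mycsin {f : ℝ → ℂ} {f' : ℂ} {x : ℝ} (hf : HasDerivAt f f' x) :
    HasDerivAt (fun y => Complex.sin (f y)) (Complex.cos (f x) * f') x := by
  have h := ((Complex.hasDerivAt_sin (f x)).hasFDerivAt.restrictScalars ℝ).comp_hasDerivAt x hf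
  simpa [mul_comm, Function.comp_def] using h

/-- With `g̃ = [[cos(Θ/2), -sin(Θ/2)],[sin(Θ/2), cos(Θ/2)]]`, the four reduced
equations hold iff `Θ` satisfies the sine-Gordon equation `Θ_{xt} = sin Θ`. -/
theorem stmt8 (Θ : ℝ → ℝ → ℂ)
    (hΘ : ContDiff ℝ (⊤ : ℕ∞) (fun p : ℝ × ℝ => Θ p.1 p.2)) :
    (let g11 : ℝ → ℝ → ℂ := fun x t => Complex.cos (Θ x t / 2)
     let g12 : ℝ → ℝ → ℂ := fun x t => -Complex.sin (Θ x t / 2)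
     let g21 : ℝ → ℝ → ℂ := fun x t => Complex.sin (Θ x t / 2)
     let g22 : ℝ → ℝ → ℂ := fun x t => Complex.cos (Θ x t / 2)
     (∀ x t : ℝ,
        px (fun x' t' => g22 x' t' * pt g11 x' t' - g21 x' t' * pt g12 x' t') x t = 0)
     ∧ (∀ x t : ℝ,
        px (fun x' t' => g11 x' t' * pt g22 x' t' - g12 x' t' * pt g21 x' t') x t = 0)
     ∧ (∀ x t : ℝ,
        g11 x t * g12 x t
          - px (fun x' t' => g11 x' t' * pt g12 x' t' - g12 x' t' * pt g11 x' t') x t = 0)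
     ∧ (∀ x t : ℝ,
        g21 x t * g22 x t
          - px (fun x' t' => g22 x' t' * pt g21 x' t' - g21 x' t' * pt g22 x' t') x t = 0))
    ↔ (∀ x t : ℝ, pt (px Θ) x t = Complex.sin (Θ x t)) := by
  set F : ℝ × ℝ → ℂ := fun p => Θ p.1 p.2 with hFdef
  have hF : ContDiff ℝ (⊤ : ℕ∞) F := hΘ
  have hFd : Differentiable ℝ F := hF.differentiable (by simp)
  have hdF : ContDiff ℝ (⊤ : ℕ∞) (fderiv ℝ F) := hF.fderiv_right (by simp)
  have hdFd : Differentiable ℝ (fderiv ℝ F) := hdF.differentiable (by simp)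
  have hdt : ∀ x t, HasDerivAt (fun t' => Θ x t') (fderiv ℝ F (x, t) (0, 1)) t := by
    intro x t
    have h1 : HasDerivAt (fun t' : ℝ => ((x, t') : ℝ × ℝ)) ((0 : ℝ), (1 : ℝ)) t :=
      (hasDerivAt_const t x).prodMk (hasDerivAt_id t)
    exact (hFd (x, t)).hasFDerivAt.comp_hasDerivAt t h1
  have hdx : ∀ x t, HasDerivAt (fun x' => Θ x' t) (fderiv ℝ F (x, t) (1, 0)) x := by
    intro x t
    have h1 : HasDerivAt (fun x' : ℝ => ((x', t) : ℝ × ℝ)) ((1 : ℝ), (0 : ℝ)) x :=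
      (hasDerivAt_id x).prodMk (hasDerivAt_const x t)
    exact (hFd (x, t)).hasFDerivAt.comp_hasDerivAt x h1
  set G : ℝ × ℝ → ℂ := fun p => fderiv ℝ F p (0, 1) with hGdef
  set H : ℝ × ℝ → ℂ := fun p => fderiv ℝ F p (1, 0) with hHdef
  set S : ℝ → ℝ → ℂ := fun x t => fderiv ℝ (fderiv ℝ F) (x, t) (1, 0) (0, 1) with hSdef
  have hsymm : ∀ x t : ℝ,
      fderiv ℝ (fderiv ℝ F) (x, t) (0, 1) (1, 0) = S x t := fun x t =>
    second_derivative_symmetric (fun y => (hFd y).hasFDerivAt)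
      (hdFd (x, t)).hasFDerivAt _ _
  -- derivative of G along x
  have hGx : ∀ x t, HasDerivAt (fun x' => G (x', t)) (S x t) x := by
    intro x t
    have hA : HasFDerivAt G
        (((ContinuousLinearMap.apply ℝ ℂ ((0 : ℝ), (1 : ℝ)))).comp
          (fderiv ℝ (fderiv ℝ F) (x, t))) (x, t) :=
      (ContinuousLinearMap.apply ℝ ℂ ((0 : ℝ), (1 : ℝ))).hasFDerivAt.comp (x, t)
        (hdFd (x, t)).hasFDerivAt
    have h1 : HasDerivAt (fun x' : ℝ => ((x', t) : ℝ × ℝ)) ((1 : ℝ), (0 : ℝ)) x :=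
      (hasDerivAt_id x).prodMk (hasDerivAt_const x t)
    exact hA.comp_hasDerivAt x h1
  have hHt : ∀ x t, HasDerivAt (fun t' => H (x, t')) (S x t) t := by
    intro x t
    have hA : HasFDerivAt H
        (((ContinuousLinearMap.apply ℝ ℂ ((1 : ℝ), (0 : ℝ)))).comp
          (fderiv ℝ (fderiv ℝ F) (x, t))) (x, t) :=
      (ContinuousLinearMap.apply ℝ ℂ ((1 : ℝ), (0 : ℝ))).hasFDerivAt.comp (x, t)
        (hdFd (x, t)).hasFDerivAt
    have h1 : HasDerivAt (fun t' : ℝ => ((x, t') : ℝ × ℝ)) ((0 : ℝ), (1 : ℝ)) t :=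
      (hasDerivAt_const t x).prodMk (hasDerivAt_id t)
    have := hA.comp_hasDerivAt t h1
    simpa [hsymm x t, Function.comp_def] using this
  -- mixed partial
  have key : ∀ x t, pt (px Θ) x t = S x t := by
    intro x t
    have h1 : (fun t' => px Θ x t') = fun t' => H (x, t') :=
      funext fun t' => (hdx x t').deriv
    show deriv (fun t' => px Θ x t') t = S x t
    rw [h1]
    exact (hHt x t).deriv
  -- pointwise t-derivatives of the entries
  have ptg11 : ∀ x t, deriv (fun t' => Complex.cos (Θ x t' / 2)) t
      = -Complex.sin (Θ x t / 2) * (G (x, t) / 2) := fun x t =>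
    (myccos ((hdt x t).div_const 2)).deriv
  have ptg21 : ∀ x t, deriv (fun t' => Complex.sin (Θ x t' / 2)) t
      = Complex.cos (Θ x t / 2) * (G (x, t) / 2) := fun x t =>
    (mycsin ((hdt x t).div_const 2)).deriv
  have ptg12 : ∀ x t, deriv (fun t' => -Complex.sin (Θ x t' / 2)) t
      = -(Complex.cos (Θ x t / 2) * (G (x, t) / 2)) := fun x t =>
    ((mycsin ((hdt x t).div_const 2)).neg).deriv
  simp only [px, pt]
  have pyth : ∀ z : ℂ, Complex.cos z ^ 2 + Complex.sin z ^ 2 = 1 :=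
    fun z => Complex.cos_sq_add_sin_sq z
  have E1 : ∀ x t : ℝ, deriv (fun x' =>
      Complex.cos (Θ x' t / 2) * deriv (fun t' => Complex.cos (Θ x' t' / 2)) t
        - Complex.sin (Θ x' t / 2) * deriv (fun t' => -Complex.sin (Θ x' t' / 2)) t) x = 0 := by
    intro x t
    have : (fun x' =>
        Complex.cos (Θ x' t / 2) * deriv (fun t' => Complex.cos (Θ x' t' / 2)) t
          - Complex.sin (Θ x' t / 2) * deriv (fun t' => -Complex.sin (Θ x' t' / 2)) t)
        = fun _ => (0 : ℂ) := by
      funext x'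
      rw [ptg11 x' t, ptg12 x' t]; ring
    rw [this, deriv_const]
  have E2 : ∀ x t : ℝ, deriv (fun x' =>
      Complex.cos (Θ x' t / 2) * deriv (fun t' => Complex.cos (Θ x' t' / 2)) t
        - -Complex.sin (Θ x' t / 2) * deriv (fun t' => Complex.sin (Θ x' t' / 2)) t) x = 0 := by
    intro x t
    have : (fun x' =>
        Complex.cos (Θ x' t / 2) * deriv (fun t' => Complex.cos (Θ x' t' / 2)) t
          - -Complex.sin (Θ x' t / 2) * deriv (fun t' => Complex.sin (Θ x' t' / 2)) t)
        = fun _ => (0 : ℂ) := by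
      funext x'
      rw [ptg11 x' t, ptg21 x' t]; ring
    rw [this, deriv_const]
  have E3 : ∀ x t : ℝ, deriv (fun x' =>
      Complex.cos (Θ x' t / 2) * deriv (fun t' => -Complex.sin (Θ x' t' / 2)) t
        - -Complex.sin (Θ x' t / 2) * deriv (fun t' => Complex.cos (Θ x' t' / 2)) t) x
        = -(S x t) / 2 := by
    intro x t
    have h : (fun x' =>
        Complex.cos (Θ x' t / 2) * deriv (fun t' => -Complex.sin (Θ x' t' / 2)) t
          - -Complex.sin (Θ x' t / 2) * deriv (fun t' => Complex.cos (Θ x' t' / 2)) t)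
        = fun x' => -(G (x', t)) / 2 := by
      funext x'
      rw [ptg12 x' t, ptg11 x' t]
      linear_combination (-(G (x', t)) / 2) * pyth (Θ x' t / 2)
    rw [h]
    exact (((hGx x t).neg).div_const 2).deriv
  have E4 : ∀ x t : ℝ, deriv (fun x' =>
      Complex.cos (Θ x' t / 2) * deriv (fun t' => Complex.sin (Θ x' t' / 2)) t
        - Complex.sin (Θ x' t / 2) * deriv (fun t' => Complex.cos (Θ x' t' / 2)) t) x
        = S x t / 2 := by
    intro x t
    have h : (fun x' =>
        Complex.cos (Θ x' t / 2) * deriv (fun t' => Complex.sin (Θ x' t' / 2)) t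
          - Complex.sin (Θ x' t / 2) * deriv (fun t' => Complex.cos (Θ x' t' / 2)) t)
        = fun x' => G (x', t) / 2 := by
      funext x'
      rw [ptg21 x' t, ptg11 x' t]
      linear_combination (G (x', t) / 2) * pyth (Θ x' t / 2)
    rw [h]
    exact ((hGx x t).div_const 2).deriv
  have sinΘ : ∀ x t : ℝ, Complex.sin (Θ x t)
      = 2 * Complex.sin (Θ x t / 2) * Complex.cos (Θ x t / 2) := by
    intro x t
    rw [← Complex.sin_two_mul, mul_div_cancel₀ _ (two_ne_zero (α := ℂ))]
  constructor
  · rintro ⟨-, -, h3, -⟩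
    intro x t
    have h := h3 x t
    rw [E3 x t] at h
    have k : deriv (fun t' => deriv (fun x' => Θ x' t') x) t = S x t := key x t
    rw [k, sinΘ x t]
    linear_combination 2 * h
  · intro h
    have hS : ∀ x t : ℝ, S x t = Complex.sin (Θ x t) := by
      intro x t; rw [← key x t]; exact h x t
    refine ⟨E1, E2, ?_, ?_⟩
    · intro x t
      rw [E3 x t, hS x t, sinΘ x t]; ring
    · intro x t
      rw [E4 x t, hS x t, sinΘ x t]; ring
end

section
/- Let Γ ∈ Mat_n(ℂ) be such that Γ and −Γ† have no common eigenvalue, let η₁ ∈ ℂⁿ (column vector), and let Ω₁ be the unique solution of the Lyapunov equation Γ Ω₁ + Ω₁ Γ† = i η₁ η₁† Γ†. Then (Γ Ω₁)† = −Γ Ω₁. -/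
/-!
With `Y := ΓΩ₁ + (ΓΩ₁)ᴴ`, the Lyapunov equation and its conjugate transpose give
`ΓY + YΓᴴ = iΓNΓᴴ - iΓNΓᴴ = 0` for the Hermitian `N = η₁η₁ᴴ`, i.e. `ΓY = Y(-Γᴴ)`.
Such an intertwiner of two matrices with disjoint spectra vanishes: if `χ` is the
characteristic polynomial of `Γ`, then `0 = χ(Γ)Y = Yχ(-Γᴴ)`, and `χ(-Γᴴ)` is invertible
because `χ` has no root in the spectrum of `-Γᴴ`.
-/

open Matrix Polynomial

namespace Matrix

section Sylvester

variable {K m n : Type*} [Field K] [Fintype m] [DecidableEq m] [Fintype n] [DecidableEq n]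

theorem aeval_mul_eq_mul_aeval {A : Matrix m m K} {B : Matrix n n K} {Y : Matrix m n K}
    (h : A * Y = Y * B) (p : K[X]) : aeval A p * Y = Y * aeval B p := by
  induction p using Polynomial.induction_on with
  | C a =>
    simp only [aeval_C, Algebra.algebraMap_eq_smul_one, Matrix.smul_mul, Matrix.mul_smul,
      Matrix.one_mul, Matrix.mul_one]
  | add p q hp hq => rw [map_add, map_add, Matrix.add_mul, Matrix.mul_add, hp, hq]
  | monomial k a ih =>
    rw [pow_succ, ← mul_assoc, map_mul (aeval A) (C a * X ^ k), map_mul (aeval B) (C a * X ^ k),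
      aeval_X, aeval_X, Matrix.mul_assoc, h, ← Matrix.mul_assoc, ih, Matrix.mul_assoc]

theorem isUnit_aeval_charpoly_of_disjoint_spectrum [IsAlgClosed K] {A : Matrix m m K}
    {B : Matrix n n K} (h : Disjoint (spectrum K A) (spectrum K B)) :
    IsUnit (aeval B A.charpoly) := by
  by_contra hB
  rw [(IsAlgClosed.splits A.charpoly).eq_prod_roots_of_monic A.charpoly_monic] at hB
  obtain ⟨k, hkB, hkA⟩ := spectrum.exists_mem_of_not_isUnit_aeval_prod hB
  exact h.notMem_of_mem_right hkB (mem_spectrum_of_isRoot_charpoly hkA)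

theorem eq_zero_of_mul_eq_mul_of_disjoint_spectrum [IsAlgClosed K] {A : Matrix m m K}
    {B : Matrix n n K} {Y : Matrix m n K} (hAB : Disjoint (spectrum K A) (spectrum K B))
    (h : A * Y = Y * B) : Y = 0 := by
  have hY : Y * aeval B A.charpoly = 0 := by
    rw [← aeval_mul_eq_mul_aeval h, aeval_self_charpoly, Matrix.zero_mul]
  have hdet := (isUnit_iff_isUnit_det _).mp (isUnit_aeval_charpoly_of_disjoint_spectrum hAB)
  rw [← mul_nonsing_inv_cancel_right (A := aeval B A.charpoly) Y hdet, hY, Matrix.zero_mul]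

end Sylvester

theorem mul_add_conjTranspose_intertwines_of_lyapunov {n : Type*} [Fintype n]
    {Γ Ω N : Matrix n n ℂ} (hN : N.IsHermitian)
    (hΩ : Γ * Ω + Ω * Γᴴ = Complex.I • (N * Γᴴ)) :
    Γ * (Γ * Ω + (Γ * Ω)ᴴ) = (Γ * Ω + (Γ * Ω)ᴴ) * -Γᴴ := by
  have hΩH : Ωᴴ * Γᴴ + Γ * Ωᴴ = -Complex.I • (Γ * N) := by
    simpa [hN.eq, Matrix.mul_assoc] using congrArg conjTranspose hΩ
  rw [← sub_eq_zero]
  calc _ = Γ * (Γ * Ω + Ω * Γᴴ) + (Ωᴴ * Γᴴ + Γ * Ωᴴ) * Γᴴ := by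
          rw [conjTranspose_mul]; noncomm_ring
    _ = 0 := by rw [hΩ, hΩH]; simp [Matrix.mul_assoc]

theorem isHermitian_vecMulVec_star {α n : Type*} [Mul α] [StarMul α] (v : n → α) :
    (vecMulVec v (star v)).IsHermitian := by
  rw [IsHermitian, conjTranspose_vecMulVec, star_star]

end Matrix

/-- If `Γ` and `-Γᴴ` have no common eigenvalue and `Ω₁` solves the Lyapunov
equation `ΓΩ₁ + Ω₁Γᴴ = i η₁η₁ᴴ Γᴴ`, then `(ΓΩ₁)ᴴ = -ΓΩ₁`. -/
theorem stmt10 (n : ℕ) (Γ Ω₁ : Matrix (Fin n) (Fin n) ℂ) (η₁ : Fin n → ℂ)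
    (hspec : spectrum ℂ Γ ∩ spectrum ℂ (-Γᴴ) = ∅)
    (hΩ : Γ * Ω₁ + Ω₁ * Γᴴ = Complex.I • (vecMulVec η₁ (star η₁) * Γᴴ)) :
    (Γ * Ω₁)ᴴ = -(Γ * Ω₁) := by
  have hY : Γ * Ω₁ + (Γ * Ω₁)ᴴ = 0 :=
    eq_zero_of_mul_eq_mul_of_disjoint_spectrum (Set.disjoint_iff_inter_eq_empty.mpr hspec)
      (mul_add_conjTranspose_intertwines_of_lyapunov (isHermitian_vecMulVec_star η₁) hΩ)
  exact eq_neg_of_add_eq_zero_right hY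
end

section
/- Let Ω be an invertible n×n complex matrix, η₂ ∈ ℂⁿ a column vector, η₁ ∈ ℂⁿ, and Γ invertible with η₂ η₂† = Γ Ω + Ω† Γ†. Define u' = −η₂† Ω^{-1} η₁ and v' = η₁† Γ† Ω^{-1} Γ^{-1} η₂ / (1 − η₂† Ω^{-1} Γ^{-1} η₂), assuming the denominator is nonzero. Then v' = (u')^*, i.e. (u')^* (1 − η₂† Ω^{-1} Γ^{-1} η₂) = η₁† Γ† Ω^{-1} Γ^{-1} η₂. -/
open Matrix

lemma vecMulVec_mulVec' {n : ℕ} (x y z : Fin n → ℂ) :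
    (vecMulVec x y).mulVec z = (y ⬝ᵥ z) • x := by
  ext i
  simp [vecMulVec, mulVec, dotProduct, Finset.mul_sum, mul_comm, mul_assoc, mul_left_comm]

lemma dot_mul_dot {n : ℕ} (a b x y : Fin n → ℂ) (M N : Matrix (Fin n) (Fin n) ℂ) :
    (a ⬝ᵥ M.mulVec x) * (y ⬝ᵥ N.mulVec b) = a ⬝ᵥ (M * vecMulVec x y * N).mulVec b := by
  rw [← mulVec_mulVec, ← mulVec_mulVec, vecMulVec_mulVec', mulVec_smul, dotProduct_smul,
    smul_eq_mul, mul_comm]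

/-- Pointwise reduction identity: if `η₂η₂ᴴ = ΓΩ + ΩᴴΓᴴ` with `Ω`, `Γ` invertible,
then for `u' = -η₂ᴴΩ⁻¹η₁` and
`v' = η₁ᴴΓᴴΩ⁻¹Γ⁻¹η₂ / (1 - η₂ᴴΩ⁻¹Γ⁻¹η₂)` (denominator nonzero), one has
`v' = (u')^*`, i.e. `(u')^*(1 - η₂ᴴΩ⁻¹Γ⁻¹η₂) = η₁ᴴΓᴴΩ⁻¹Γ⁻¹η₂`. -/
theorem stmt16 (n : ℕ) (Γ Ω : Matrix (Fin n) (Fin n) ℂ) (η₁ η₂ : Fin n → ℂ)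
    (hΓ : IsUnit Γ) (hΩ : IsUnit Ω)
    (hkey : vecMulVec η₂ (star η₂) = Γ * Ω + Ωᴴ * Γᴴ)
    (hden : (1 : ℂ) - star η₂ ⬝ᵥ (Ω⁻¹ * Γ⁻¹).mulVec η₂ ≠ 0) :
    star (-(star η₂ ⬝ᵥ Ω⁻¹.mulVec η₁))
        * (1 - star η₂ ⬝ᵥ (Ω⁻¹ * Γ⁻¹).mulVec η₂)
      = star η₁ ⬝ᵥ (Γᴴ * Ω⁻¹ * Γ⁻¹).mulVec η₂
    ∧ (star η₁ ⬝ᵥ (Γᴴ * Ω⁻¹ * Γ⁻¹).mulVec η₂)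
        / (1 - star η₂ ⬝ᵥ (Ω⁻¹ * Γ⁻¹).mulVec η₂)
      = star (-(star η₂ ⬝ᵥ Ω⁻¹.mulVec η₁)) := by
  have hΩ' : IsUnit Ω.det := (isUnit_iff_isUnit_det Ω).mp hΩ
  have hΓ' : IsUnit Γ.det := (isUnit_iff_isUnit_det Γ).mp hΓ
  have hstar : star (star η₂ ⬝ᵥ Ω⁻¹.mulVec η₁)
      = star η₁ ⬝ᵥ (Ωᴴ)⁻¹.mulVec η₂ := by
    rw [star_dotProduct, star_mulVec, star_star, conjTranspose_nonsing_inv,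
      ← dotProduct_mulVec]
  have hmul : (star η₁ ⬝ᵥ (Ωᴴ)⁻¹.mulVec η₂) * (star η₂ ⬝ᵥ (Ω⁻¹ * Γ⁻¹).mulVec η₂)
      = star η₁ ⬝ᵥ ((Ωᴴ)⁻¹ * vecMulVec η₂ (star η₂) * (Ω⁻¹ * Γ⁻¹)).mulVec η₂ :=
    dot_mul_dot _ _ _ _ _ _
  have hexp : (Ωᴴ)⁻¹ * vecMulVec η₂ (star η₂) * (Ω⁻¹ * Γ⁻¹)
      = (Ωᴴ)⁻¹ + Γᴴ * Ω⁻¹ * Γ⁻¹ := by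
    rw [hkey, mul_add, add_mul]
    have h1 : (Ωᴴ)⁻¹ * (Γ * Ω) * (Ω⁻¹ * Γ⁻¹) = (Ωᴴ)⁻¹ := by
      rw [show (Ωᴴ)⁻¹ * (Γ * Ω) * (Ω⁻¹ * Γ⁻¹) = (Ωᴴ)⁻¹ * (Γ * (Ω * Ω⁻¹) * Γ⁻¹) by noncomm_ring,
        mul_nonsing_inv _ hΩ', mul_one, mul_nonsing_inv _ hΓ', mul_one]
    have h2 : (Ωᴴ)⁻¹ * (Ωᴴ * Γᴴ) * (Ω⁻¹ * Γ⁻¹) = Γᴴ * Ω⁻¹ * Γ⁻¹ := by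
      rw [show (Ωᴴ)⁻¹ * (Ωᴴ * Γᴴ) * (Ω⁻¹ * Γ⁻¹) = ((Ωᴴ)⁻¹ * Ωᴴ) * (Γᴴ * Ω⁻¹ * Γ⁻¹) by noncomm_ring,
        nonsing_inv_mul _ (by simpa using hΩ'), one_mul]
    rw [h1, h2]
  have key : star (-(star η₂ ⬝ᵥ Ω⁻¹.mulVec η₁))
        * (1 - star η₂ ⬝ᵥ (Ω⁻¹ * Γ⁻¹).mulVec η₂)
      = star η₁ ⬝ᵥ (Γᴴ * Ω⁻¹ * Γ⁻¹).mulVec η₂ := by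
    rw [star_neg, hstar]
    have := hmul
    rw [hexp, add_mulVec, dotProduct_add] at this
    linear_combination this
  refine ⟨key, ?_⟩
  rw [← key]
  exact mul_div_cancel_right₀ _ hden
end

section
/- Let u(x,t) = A e^{iφ} with φ = αx + (2|A|² − α^{-1})t, α ≠ 0 real, A ≠ 0 complex, and let γ ∈ ℂ with R² := (α² − γ^{-2})/4 + iα²(|A|² − α^{-1}/2)γ^{-1}, γ ≠ 0. Suppose χ₁ : ℝ² → ℂ satisfies χ₁_{xx} + R²χ₁ = 0 and χ₁_t = −iα^{-1}γχ₁_x, and define χ₂ = −(i/(αA))(γ(χ₁_x + iαχ₁/2) + χ₁/2), η₁ = e^{iφ/2}χ₁, η̃₂ = e^{−iφ/2}χ₂. Then (η₁, η̃₂) solves the Lax system Γη₁_x + η₁/2 − u_x η̃₂ = 0, η₁_t − (i|u|² − Γ/2)η₁ − u η̃₂ = 0, Γη̃₂_x − η̃₂/2 + iu^*_x Γη₁ = 0, η̃₂_t + (i|u|² − Γ/2)η̃₂ − iu^* Γη₁ = 0 with Γ = γ (scalar case n = 1). -/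
/-- Scalar (`n = 1`) case: if `χ₁` solves the decoupled system
`χ₁'' + R²χ₁ = 0`, `χ₁_t = -iα⁻¹γχ₁_x` and `χ₂`, `η₁ = e^{iφ/2}χ₁`,
`η̃₂ = e^{-iφ/2}χ₂` are defined as stated, then `(η₁, η̃₂)` satisfies the Lax
system of the Fokas-Lenells equation with plane wave seed `u = Ae^{iφ}`. -/
theorem stmt19 (α : ℝ) (hα : α ≠ 0) (A : ℂ) (hA : A ≠ 0) (γ : ℂ) (hγ : γ ≠ 0)
    (u χ₁ χ₂ η₁ η₂ : ℝ → ℝ → ℂ)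
    (hu : ∀ x t : ℝ, u x t = A * Complex.exp (Complex.I
      * ((α : ℂ) * (x : ℂ) + (2 * (Complex.normSq A : ℂ) - (α : ℂ)⁻¹) * (t : ℂ))))
    (hχ₁smooth : ContDiff ℝ (⊤ : ℕ∞) (fun p : ℝ × ℝ => χ₁ p.1 p.2))
    (hχ₁xx : ∀ x t : ℝ, px (px χ₁) x t
      + (((α : ℂ)^2 - (γ⁻¹)^2) / 4
          + Complex.I * (α : ℂ)^2 * ((Complex.normSq A : ℂ) - (α : ℂ)⁻¹ / 2) * γ⁻¹)
        * χ₁ x t = 0)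
    (hχ₁t : ∀ x t : ℝ, pt χ₁ x t = -Complex.I * (α : ℂ)⁻¹ * γ * px χ₁ x t)
    (hχ₂ : ∀ x t : ℝ, χ₂ x t
      = -(Complex.I / ((α : ℂ) * A))
          * (γ * (px χ₁ x t + Complex.I * (α : ℂ) * χ₁ x t / 2) + χ₁ x t / 2))
    (hη₁ : ∀ x t : ℝ, η₁ x t = Complex.exp (Complex.I
      * ((α : ℂ) * (x : ℂ) + (2 * (Complex.normSq A : ℂ) - (α : ℂ)⁻¹) * (t : ℂ)) / 2)
        * χ₁ x t)
    (hη₂ : ∀ x t : ℝ, η₂ x t = Complex.exp (-(Complex.I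
      * ((α : ℂ) * (x : ℂ) + (2 * (Complex.normSq A : ℂ) - (α : ℂ)⁻¹) * (t : ℂ)) / 2))
        * χ₂ x t) :
    (∀ x t : ℝ, γ * px η₁ x t + η₁ x t / 2 - px u x t * η₂ x t = 0)
    ∧ (∀ x t : ℝ, pt η₁ x t
        - (Complex.I * (u x t * star (u x t)) - γ / 2) * η₁ x t - u x t * η₂ x t = 0)
    ∧ (∀ x t : ℝ, γ * px η₂ x t - η₂ x t / 2
        + Complex.I * px (fun x' t' => star (u x' t')) x t * γ * η₁ x t = 0)
    ∧ (∀ x t : ℝ, pt η₂ x t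
        + (Complex.I * (u x t * star (u x t)) - γ / 2) * η₂ x t
        - Complex.I * star (u x t) * γ * η₁ x t = 0) := by
  have hα' : (α : ℂ) ≠ 0 := Complex.ofReal_ne_zero.mpr hα
  set c : ℂ := 2 * (Complex.normSq A : ℂ) - (α : ℂ)⁻¹ with hc
  have hcconj : (starRingEnd ℂ) c = c := by
    rw [hc]; simp [map_sub, map_mul, map_inv₀, map_ofNat, Complex.conj_ofReal]
  have hNA : (Complex.normSq A : ℂ) = A * (starRingEnd ℂ) A := (Complex.mul_conj A).symm
  -- derivatives of the linear phase
  have hlinx : ∀ (t x : ℝ), HasDerivAt (fun x' : ℝ => Complex.I * ((α:ℂ) * x' + c * t))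
      (Complex.I * (α:ℂ)) x := by
    intro t x
    have h1 : HasDerivAt (fun x' : ℝ => ((x' : ℝ) : ℂ)) 1 x := (hasDerivAt_id x).ofReal_comp
    simpa using ((h1.const_mul ((α:ℂ))).add_const (c * t)).const_mul Complex.I
  have hlint : ∀ (x t : ℝ), HasDerivAt (fun t' : ℝ => Complex.I * ((α:ℂ) * x + c * t'))
      (Complex.I * c) t := by
    intro x t
    have h1 : HasDerivAt (fun t' : ℝ => ((t' : ℝ) : ℂ)) 1 t := (hasDerivAt_id t).ofReal_comp
    simpa using ((h1.const_mul c).const_add ((α:ℂ) * x)).const_mul Complex.I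
  -- partial derivative facts for χ₁
  have hdx : ∀ t : ℝ, ContDiff ℝ (⊤ : ℕ∞) (fun x' => χ₁ x' t) := fun t =>
    hχ₁smooth.comp (ContDiff.prodMk contDiff_id contDiff_const)
  have hd1 : ∀ (x t : ℝ), HasDerivAt (fun x' => χ₁ x' t) (px χ₁ x t) x := fun x t =>
    ((hdx t).differentiable (by simp) x).hasDerivAt
  have hd2 : ∀ (x t : ℝ), HasDerivAt (fun x' => px χ₁ x' t) (px (px χ₁) x t) x := by
    intro x t
    have h := (contDiff_infty_iff_deriv.mp ((hdx t).of_le (by simp))).2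
    exact (h.differentiable (by simp) x).hasDerivAt
  have hd3 : ∀ (x t : ℝ), HasDerivAt (fun t' => χ₁ x t') (pt χ₁ x t) t := fun x t =>
    ((hχ₁smooth.comp (ContDiff.prodMk contDiff_const contDiff_id)).differentiable (by simp) t).hasDerivAt
  -- mixed second derivative via Clairaut
  have hF : ∀ p : ℝ × ℝ, HasFDerivAt (fun p : ℝ × ℝ => χ₁ p.1 p.2)
      (fderiv ℝ (fun p : ℝ × ℝ => χ₁ p.1 p.2) p) p :=
    fun p => (hχ₁smooth.differentiable (by simp) p).hasFDerivAt
  have hFs : ContDiff ℝ (⊤ : ℕ∞) (fderiv ℝ (fun p : ℝ × ℝ => χ₁ p.1 p.2)) :=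
    hχ₁smooth.fderiv_right (by simp)
  have hlx : ∀ (x t : ℝ), HasDerivAt (fun x' : ℝ => ((x' : ℝ), t)) ((1:ℝ), (0:ℝ)) x :=
    fun x t => HasDerivAt.prodMk (hasDerivAt_id x) (hasDerivAt_const x t)
  have hlt : ∀ (x t : ℝ), HasDerivAt (fun t' : ℝ => (x, (t' : ℝ))) ((0:ℝ), (1:ℝ)) t :=
    fun x t => HasDerivAt.prodMk (hasDerivAt_const t x) (hasDerivAt_id t)
  have hpx_eq : ∀ (x t : ℝ), px χ₁ x t
      = fderiv ℝ (fun p : ℝ × ℝ => χ₁ p.1 p.2) (x, t) (1, 0) :=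
    fun x t => by
      have h := ((hF (x, t)).comp_hasDerivAt x (hlx x t)).deriv
      exact h
  have hpt_eq : ∀ (x t : ℝ), pt χ₁ x t
      = fderiv ℝ (fun p : ℝ × ℝ => χ₁ p.1 p.2) (x, t) (0, 1) :=
    fun x t => ((hF (x, t)).comp_hasDerivAt t (hlt x t)).deriv
  have hd4 : ∀ (x t : ℝ), HasDerivAt (fun t' => px χ₁ x t')
      (fderiv ℝ (fderiv ℝ (fun p : ℝ × ℝ => χ₁ p.1 p.2)) (x, t) (0, 1) (1, 0)) t := by
    intro x t
    have h2 := ((ContinuousLinearMap.apply ℝ ℂ ((1:ℝ),(0:ℝ))).hasFDerivAt.comp (x, t)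
      ((hFs.differentiable (by simp) (x, t)).hasFDerivAt)).comp_hasDerivAt t (hlt x t)
    have h3 : (fun t' : ℝ => px χ₁ x t')
        = fun t' : ℝ => fderiv ℝ (fun p : ℝ × ℝ => χ₁ p.1 p.2) (x, t') (1, 0) :=
      funext fun t' => hpx_eq x t'
    rw [h3]
    simpa [Function.comp_def] using h2
  have hd4' : ∀ (x t : ℝ), HasDerivAt (fun x' => pt χ₁ x' t)
      (fderiv ℝ (fderiv ℝ (fun p : ℝ × ℝ => χ₁ p.1 p.2)) (x, t) (1, 0) (0, 1)) x := by
    intro x t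
    have h2 := ((ContinuousLinearMap.apply ℝ ℂ ((0:ℝ),(1:ℝ))).hasFDerivAt.comp (x, t)
      ((hFs.differentiable (by simp) (x, t)).hasFDerivAt)).comp_hasDerivAt x (hlx x t)
    have h3 : (fun x' : ℝ => pt χ₁ x' t)
        = fun x' : ℝ => fderiv ℝ (fun p : ℝ × ℝ => χ₁ p.1 p.2) (x', t) (0, 1) :=
      funext fun x' => hpt_eq x' t
    rw [h3]
    simpa [Function.comp_def] using h2
  have hmixval : ∀ (x t : ℝ), pt (px χ₁) x t
      = -Complex.I * (α : ℂ)⁻¹ * γ * px (px χ₁) x t := by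
    intro x t
    have s1 : pt (px χ₁) x t
        = fderiv ℝ (fderiv ℝ (fun p : ℝ × ℝ => χ₁ p.1 p.2)) (x, t) (0, 1) (1, 0) :=
      (hd4 x t).deriv
    have s2 : fderiv ℝ (fderiv ℝ (fun p : ℝ × ℝ => χ₁ p.1 p.2)) (x, t) (0, 1) (1, 0)
        = fderiv ℝ (fderiv ℝ (fun p : ℝ × ℝ => χ₁ p.1 p.2)) (x, t) (1, 0) (0, 1) :=
      second_derivative_symmetric hF ((hFs.differentiable (by simp) (x, t)).hasFDerivAt) _ _
    have s3 : px (pt χ₁) x t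
        = fderiv ℝ (fderiv ℝ (fun p : ℝ × ℝ => χ₁ p.1 p.2)) (x, t) (1, 0) (0, 1) :=
      (hd4' x t).deriv
    have s4 : px (pt χ₁) x t = -Complex.I * (α : ℂ)⁻¹ * γ * px (px χ₁) x t := by
      show deriv (fun x' => pt χ₁ x' t) x = _
      have hfun : (fun x' : ℝ => pt χ₁ x' t)
          = fun x' : ℝ => -Complex.I * (α : ℂ)⁻¹ * γ * px χ₁ x' t :=
        funext fun x' => hχ₁t x' t
      rw [hfun]
      exact ((hd2 x t).const_mul _).deriv
    rw [s1, s2, ← s3, s4]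
  have hmixHD : ∀ (x t : ℝ), HasDerivAt (fun t' => px χ₁ x t') (pt (px χ₁) x t) t := by
    intro x t
    have h := hd4 x t
    have : pt (px χ₁) x t
        = fderiv ℝ (fderiv ℝ (fun p : ℝ × ℝ => χ₁ p.1 p.2)) (x, t) (0, 1) (1, 0) :=
      (hd4 x t).deriv
    rw [this]
    exact h
  -- derivatives of χ₂
  have hCx : ∀ (x t : ℝ), HasDerivAt (fun x' => χ₂ x' t)
      (-(Complex.I / ((α : ℂ) * A))
        * (γ * (px (px χ₁) x t + Complex.I * (α : ℂ) * px χ₁ x t / 2) + px χ₁ x t / 2)) x := by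
    intro x t
    have hfun : (fun x' : ℝ => χ₂ x' t) = fun x' : ℝ => -(Complex.I / ((α : ℂ) * A))
        * (γ * (px χ₁ x' t + Complex.I * (α : ℂ) * χ₁ x' t / 2) + χ₁ x' t / 2) :=
      funext fun x' => hχ₂ x' t
    rw [hfun]
    exact ((((hd2 x t).add (((hd1 x t).const_mul (Complex.I * (α : ℂ))).div_const 2)).const_mul
      γ).add ((hd1 x t).div_const 2)).const_mul _
  have hCt : ∀ (x t : ℝ), HasDerivAt (fun t' => χ₂ x t')
      (-(Complex.I / ((α : ℂ) * A))
        * (γ * (pt (px χ₁) x t + Complex.I * (α : ℂ) * pt χ₁ x t / 2) + pt χ₁ x t / 2)) t := by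
    intro x t
    have hfun : (fun t' : ℝ => χ₂ x t') = fun t' : ℝ => -(Complex.I / ((α : ℂ) * A))
        * (γ * (px χ₁ x t' + Complex.I * (α : ℂ) * χ₁ x t' / 2) + χ₁ x t' / 2) :=
      funext fun t' => hχ₂ x t'
    rw [hfun]
    exact ((((hmixHD x t).add (((hd3 x t).const_mul (Complex.I * (α : ℂ))).div_const 2)).const_mul
      γ).add ((hd3 x t).div_const 2)).const_mul _
  -- star of u
  have hst : ∀ x t : ℝ, star (u x t)
      = (starRingEnd ℂ) A * Complex.exp (-(Complex.I * ((α:ℂ) * x + c * t))) := by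
    intro x t
    rw [hu, star_mul']
    simp only [Complex.star_def, ← Complex.exp_conj]
    congr 2
    simp only [map_mul, map_add, Complex.conj_I, Complex.conj_ofReal, hcconj]
    ring
  -- partial derivatives of η₁, η₂, u, star u
  have Epx₁ : ∀ x t : ℝ, px η₁ x t
      = Complex.exp (Complex.I * ((α:ℂ) * x + c * t) / 2) * (Complex.I * (α:ℂ) / 2) * χ₁ x t
        + Complex.exp (Complex.I * ((α:ℂ) * x + c * t) / 2) * px χ₁ x t := by
    intro x t
    have hfun : (fun x' : ℝ => η₁ x' t)
        = fun x' : ℝ => Complex.exp (Complex.I * ((α:ℂ) * x' + c * t) / 2) * χ₁ x' t :=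
      funext fun x' => hη₁ x' t
    show deriv (fun x' : ℝ => η₁ x' t) x = _
    rw [hfun]
    exact ((((hlinx t x).div_const 2).cexp).mul (hd1 x t)).deriv
  have Ept₁ : ∀ x t : ℝ, pt η₁ x t
      = Complex.exp (Complex.I * ((α:ℂ) * x + c * t) / 2) * (Complex.I * c / 2) * χ₁ x t
        + Complex.exp (Complex.I * ((α:ℂ) * x + c * t) / 2) * pt χ₁ x t := by
    intro x t
    have hfun : (fun t' : ℝ => η₁ x t')
        = fun t' : ℝ => Complex.exp (Complex.I * ((α:ℂ) * x + c * t') / 2) * χ₁ x t' :=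
      funext fun t' => hη₁ x t'
    show deriv (fun t' : ℝ => η₁ x t') t = _
    rw [hfun]
    exact ((((hlint x t).div_const 2).cexp).mul (hd3 x t)).deriv
  have Epx₂ : ∀ x t : ℝ, px η₂ x t
      = Complex.exp (-(Complex.I * ((α:ℂ) * x + c * t) / 2)) * (-(Complex.I * (α:ℂ) / 2))
          * χ₂ x t
        + Complex.exp (-(Complex.I * ((α:ℂ) * x + c * t) / 2))
          * (-(Complex.I / ((α : ℂ) * A))
            * (γ * (px (px χ₁) x t + Complex.I * (α : ℂ) * px χ₁ x t / 2) + px χ₁ x t / 2)) := by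
    intro x t
    have hfun : (fun x' : ℝ => η₂ x' t)
        = fun x' : ℝ => Complex.exp (-(Complex.I * ((α:ℂ) * x' + c * t) / 2)) * χ₂ x' t :=
      funext fun x' => hη₂ x' t
    show deriv (fun x' : ℝ => η₂ x' t) x = _
    rw [hfun]
    exact (((((hlinx t x).div_const 2).neg).cexp).mul (hCx x t)).deriv
  have Ept₂ : ∀ x t : ℝ, pt η₂ x t
      = Complex.exp (-(Complex.I * ((α:ℂ) * x + c * t) / 2)) * (-(Complex.I * c / 2))
          * χ₂ x t
        + Complex.exp (-(Complex.I * ((α:ℂ) * x + c * t) / 2))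
          * (-(Complex.I / ((α : ℂ) * A))
            * (γ * (pt (px χ₁) x t + Complex.I * (α : ℂ) * pt χ₁ x t / 2) + pt χ₁ x t / 2)) := by
    intro x t
    have hfun : (fun t' : ℝ => η₂ x t')
        = fun t' : ℝ => Complex.exp (-(Complex.I * ((α:ℂ) * x + c * t') / 2)) * χ₂ x t' :=
      funext fun t' => hη₂ x t'
    show deriv (fun t' : ℝ => η₂ x t') t = _
    rw [hfun]
    exact (((((hlint x t).div_const 2).neg).cexp).mul (hCt x t)).deriv
  have Epxu : ∀ x t : ℝ, px u x t
      = A * (Complex.exp (Complex.I * ((α:ℂ) * x + c * t)) * (Complex.I * (α:ℂ))) := by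
    intro x t
    have hfun : (fun x' : ℝ => u x' t)
        = fun x' : ℝ => A * Complex.exp (Complex.I * ((α:ℂ) * x' + c * t)) :=
      funext fun x' => hu x' t
    show deriv (fun x' : ℝ => u x' t) x = _
    rw [hfun]
    exact (((hlinx t x).cexp).const_mul A).deriv
  have Epxsu : ∀ x t : ℝ, px (fun x' t' => star (u x' t')) x t
      = (starRingEnd ℂ) A
        * (Complex.exp (-(Complex.I * ((α:ℂ) * x + c * t))) * (-(Complex.I * (α:ℂ)))) := by
    intro x t
    have hfun : (fun x' : ℝ => star (u x' t))
        = fun x' : ℝ => (starRingEnd ℂ) A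
            * Complex.exp (-(Complex.I * ((α:ℂ) * x' + c * t))) :=
      funext fun x' => hst x' t
    show deriv (fun x' : ℝ => star (u x' t)) x = _
    rw [hfun]
    exact ((((hlinx t x).neg).cexp).const_mul _).deriv
  -- exponential splitting
  have hEE : ∀ x t : ℝ, Complex.exp (Complex.I * ((α:ℂ) * x + c * t))
      = Complex.exp (Complex.I * ((α:ℂ) * x + c * t) / 2)
        * Complex.exp (Complex.I * ((α:ℂ) * x + c * t) / 2) := by
    intro x t
    rw [← Complex.exp_add]
    congr 1
    ring
  have hEEn : ∀ x t : ℝ, Complex.exp (-(Complex.I * ((α:ℂ) * x + c * t)))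
      = Complex.exp (-(Complex.I * ((α:ℂ) * x + c * t) / 2))
        * Complex.exp (-(Complex.I * ((α:ℂ) * x + c * t) / 2)) := by
    intro x t
    rw [← Complex.exp_add]
    congr 1
    ring
  have hef : ∀ x t : ℝ, Complex.exp (Complex.I * ((α:ℂ) * x + c * t) / 2)
      * Complex.exp (-(Complex.I * ((α:ℂ) * x + c * t) / 2)) = 1 := by
    intro x t
    rw [← Complex.exp_add]
    simp
  have hK : -(Complex.I / ((α : ℂ) * A)) = -(Complex.I * ((α:ℂ)⁻¹ * A⁻¹)) := by
    rw [div_eq_mul_inv, mul_inv]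
  have hA1 : A * A⁻¹ = 1 := mul_inv_cancel₀ hA
  have hg1 : γ * γ⁻¹ = 1 := mul_inv_cancel₀ hγ
  have ha1 : (α:ℂ) * (α:ℂ)⁻¹ = 1 := mul_inv_cancel₀ hα'
  have hxx : ∀ x t : ℝ, px (px χ₁) x t
      = -((((α : ℂ)^2 - (γ⁻¹)^2) / 4
          + Complex.I * (α : ℂ)^2 * ((Complex.normSq A : ℂ) - (α : ℂ)⁻¹ / 2) * γ⁻¹)
        * χ₁ x t) := fun x t => by linear_combination hχ₁xx x t
  refine ⟨fun x t => ?_, fun x t => ?_, fun x t => ?_, fun x t => ?_⟩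
  · -- equation 1
    rw [Epx₁, Epxu, hη₁, hη₂, hχ₂, hEE, Complex.exp_neg]
    have he : Complex.exp (Complex.I * ((α:ℂ) * x + c * t) / 2) ≠ 0 := Complex.exp_ne_zero _
    set e := Complex.exp (Complex.I * ((α:ℂ) * x + c * t) / 2) with hE
    clear_value e
    field_simp [he, hα', hA, hγ]
    linear_combination (e * γ * px χ₁ x t * 2 + e * χ₁ x t + e * γ * (α:ℂ) * χ₁ x t * Complex.I)
      * Complex.I_sq
  · -- equation 2
    rw [Ept₁, hst, hu, hη₁, hη₂, hχ₂, hχ₁t, hEE, hEEn, hK]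
    have hef' := hef x t
    set e := Complex.exp (Complex.I * ((α:ℂ) * x + c * t) / 2) with hE
    set f := Complex.exp (-(Complex.I * ((α:ℂ) * x + c * t) / 2)) with hF
    clear_value e f
    rw [hc, hNA]
    linear_combination ((-1:ℂ)*Complex.I*e*A*(starRingEnd ℂ) A*χ₁ x t + ((1:ℂ)/2)*Complex.I*e*(α:ℂ)⁻¹*A*A⁻¹*χ₁ x t + (1:ℂ)*Complex.I*e*(α:ℂ)⁻¹*A*A⁻¹*γ*px χ₁ x t + (-1:ℂ)*Complex.I*e^2*f*A*(starRingEnd ℂ) A*χ₁ x t + ((1:ℂ)/2)*Complex.I^2*e*(α:ℂ)*(α:ℂ)⁻¹*A*A⁻¹*γ*χ₁ x t) * hef'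
          + (((1:ℂ)/2)*Complex.I*e*(α:ℂ)⁻¹*χ₁ x t + (1:ℂ)*Complex.I*e*(α:ℂ)⁻¹*γ*px χ₁ x t + ((1:ℂ)/2)*Complex.I^2*e*(α:ℂ)*(α:ℂ)⁻¹*γ*χ₁ x t) * hA1
          + (((1:ℂ)/2)*Complex.I^2*e*γ*χ₁ x t) * ha1
          + (((1:ℂ)/2)*e*γ*χ₁ x t) * Complex.I_sq
  · -- equation 3
    rw [Epx₂, Epxsu, hη₁, hη₂, hχ₂, hxx, hEEn, hK]
    have hef' := hef x t
    set e := Complex.exp (Complex.I * ((α:ℂ) * x + c * t) / 2) with hE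
    set f := Complex.exp (-(Complex.I * ((α:ℂ) * x + c * t) / 2)) with hF
    clear_value e f
    rw [hNA]
    linear_combination ((-1:ℂ)*Complex.I^2*f*(α:ℂ)*(starRingEnd ℂ) A*γ*χ₁ x t) * hef'
          + ((1:ℂ)*Complex.I^2*f*(α:ℂ)^2*(α:ℂ)⁻¹*(starRingEnd ℂ) A*γ^2*γ⁻¹*χ₁ x t) * hA1
          + (((-1:ℂ)/4)*Complex.I*f*(α:ℂ)⁻¹*A⁻¹*χ₁ x t + ((-1:ℂ)/4)*Complex.I*f*(α:ℂ)⁻¹*A⁻¹*γ*γ⁻¹*χ₁ x t + (1:ℂ)*Complex.I^2*f*(α:ℂ)^2*(α:ℂ)⁻¹*(starRingEnd ℂ) A*γ*χ₁ x t + ((-1:ℂ)/2)*Complex.I^2*f*(α:ℂ)^2*(α:ℂ)⁻¹^2*A⁻¹*γ*χ₁ x t) * hg1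
          + (((1:ℂ)/4)*Complex.I*f*(α:ℂ)*A⁻¹*γ^2*χ₁ x t + (1:ℂ)*Complex.I^2*f*(α:ℂ)*(starRingEnd ℂ) A*γ*χ₁ x t + ((-1:ℂ)/2)*Complex.I^2*f*(α:ℂ)*(α:ℂ)⁻¹*A⁻¹*γ*χ₁ x t + ((1:ℂ)/4)*Complex.I^3*f*(α:ℂ)*A⁻¹*γ^2*χ₁ x t) * ha1
          + (((1:ℂ)/4)*Complex.I*f*(α:ℂ)*A⁻¹*γ^2*χ₁ x t) * Complex.I_sq
  · -- equation 4
    rw [Ept₂, hst, hu, hη₁, hη₂, hχ₂, hmixval, hχ₁t, hxx, hEE, hEEn, hK]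
    have hef' := hef x t
    set e := Complex.exp (Complex.I * ((α:ℂ) * x + c * t) / 2) with hE
    set f := Complex.exp (-(Complex.I * ((α:ℂ) * x + c * t) / 2)) with hF
    clear_value e f
    rw [hc, hNA]
    linear_combination ((-1:ℂ)*Complex.I*f*(starRingEnd ℂ) A*γ*χ₁ x t + ((-1:ℂ)/2)*Complex.I^2*f*(α:ℂ)⁻¹*A*A⁻¹*(starRingEnd ℂ) A*χ₁ x t + (-1:ℂ)*Complex.I^2*f*(α:ℂ)⁻¹*A*A⁻¹*(starRingEnd ℂ) A*γ*px χ₁ x t + ((-1:ℂ)/2)*Complex.I^2*e*f^2*(α:ℂ)⁻¹*A*A⁻¹*(starRingEnd ℂ) A*χ₁ x t + (-1:ℂ)*Complex.I^2*e*f^2*(α:ℂ)⁻¹*A*A⁻¹*(starRingEnd ℂ) A*γ*px χ₁ x t + ((-1:ℂ)/2)*Complex.I^3*f*(α:ℂ)*(α:ℂ)⁻¹*A*A⁻¹*(starRingEnd ℂ) A*γ*χ₁ x t + ((-1:ℂ)/2)*Complex.I^3*e*f^2*(α:ℂ)*(α:ℂ)⁻¹*A*A⁻¹*(starRingEnd ℂ)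 A*γ*χ₁ x t) * hef'
          + ((-1:ℂ)*Complex.I^3*f*(α:ℂ)^2*(α:ℂ)⁻¹^2*(starRingEnd ℂ) A*γ^2*γ⁻¹*χ₁ x t) * hA1
          + (((1:ℂ)/4)*Complex.I^2*f*(α:ℂ)⁻¹^2*A⁻¹*χ₁ x t + ((1:ℂ)/4)*Complex.I^2*f*(α:ℂ)⁻¹^2*A⁻¹*γ*γ⁻¹*χ₁ x t + (-1:ℂ)*Complex.I^3*f*(α:ℂ)^2*(α:ℂ)⁻¹^2*(starRingEnd ℂ) A*γ*χ₁ x t + ((1:ℂ)/2)*Complex.I^3*f*(α:ℂ)^2*(α:ℂ)⁻¹^3*A⁻¹*γ*χ₁ x t) * hg1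
          + (((-1:ℂ)/4)*Complex.I^2*f*(α:ℂ)*(α:ℂ)⁻¹*A⁻¹*γ^2*χ₁ x t + (-1:ℂ)*Complex.I^3*f*(starRingEnd ℂ) A*γ*χ₁ x t + ((1:ℂ)/4)*Complex.I^3*f*(α:ℂ)⁻¹*A⁻¹*γ*χ₁ x t + ((1:ℂ)/2)*Complex.I^3*f*(α:ℂ)⁻¹*A⁻¹*γ^2*px χ₁ x t + (-1:ℂ)*Complex.I^3*f*(α:ℂ)*(α:ℂ)⁻¹*(starRingEnd ℂ) A*γ*χ₁ x t + ((1:ℂ)/2)*Complex.I^3*f*(α:ℂ)*(α:ℂ)⁻¹^2*A⁻¹*γ*χ₁ x t) * ha1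
          + ((-1:ℂ)*Complex.I*f*(starRingEnd ℂ) A*γ*χ₁ x t + ((1:ℂ)/4)*Complex.I*f*(α:ℂ)⁻¹*A⁻¹*γ*χ₁ x t + ((1:ℂ)/2)*Complex.I*f*(α:ℂ)⁻¹*A⁻¹*γ^2*px χ₁ x t) * Complex.I_sq
end
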